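/- Let n ≥ 2 and let u : ℝⁿ → ℝⁿ be a C¹ divergence-free vector field (tr Du ≡ 0). Let x, ξ be differentiable curves with x'(t) = u(x(t)), ξ'(t) = −(Du(x(t)))ᵀ ξ(t), ξ(t) ≠ 0 for all t, and suppose ξ decays exponentially: limsup_{t→∞} (1/t) log ‖ξ(t)‖ ≤ −λ for some λ > 0. Let b₀¹, …, b₀^{n−1} ∈ ℂⁿ satisfy b₀ⁱ·ξ(0) = 0 and det[b₀¹, …, b₀^{n−1}, ξ(0)] ≠ 0, and let b₁, …, b_{n−1} be the solutions of the Euler amplitude equation bᵢ'(t) = (2ξ(t)ξ(t)ᵀ/‖ξ(t)‖² − I) Du(x(t)) bᵢ(t) with bᵢ(0) = b₀ⁱ. Then limsup_{t→∞} (1/t) log (max_{1≤i≤n−1} ‖bᵢ(t)‖) ≥ λ/(n−1) > 0; in particular, at least one solution of the amplitude equation grows exponentially. -/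

import Mathlib

/-- The Jacobian matrix `Du(x)` of a vector field `u : ℝⁿ → ℝⁿ`. -/
noncomputable def jacobian {n : ℕ} (u : (Fin n → ℝ) → (Fin n → ℝ)) (x : Fin n → ℝ) :
    Matrix (Fin n) (Fin n) ℝ :=
  Matrix.of fun i j => fderiv ℝ u x (Pi.single j 1) i

/-!
The determinant `W(t) = det[b₁(t), …, b_{n-1}(t), ξ(t)]` is conserved. Write `P = a₀(x, ξ)`.
The pairings `bᵢ · ξ` are conserved because `Pᵀξ = (Du)ᵀξ`, so they vanish for all time. By
Jacobi's formula `W' = tr P · W + det[b, D]` with `D = ξ' - Pξ`; as every `bᵢ` is orthogonal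
to `ξ`, only the `ξ`-component `(ξ · D / ‖ξ‖²) ξ = -(2 ξ·Du ξ / ‖ξ‖²) ξ` of `D` contributes,
and it cancels `tr P = 2 ξ·Du ξ / ‖ξ‖²` (here `tr Du = 0`). Hadamard-type bounds then give
`|W(0)| ≤ n! · (maxᵢ ‖bᵢ(t)‖)^(n-1) · ‖ξ(t)‖`, and the decay of `ξ` forces the growth of `b`.
-/

open Matrix Finset Filter

namespace Matrix

variable {ι K : Type*} [Fintype ι] [DecidableEq ι]

section CommRing

variable [CommRing K]

theorem sum_det_updateCol_eq_trace_adjugate_mul (A B : Matrix ι ι K) :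
    ∑ k, (A.updateCol k fun i => B i k).det = trace (adjugate A * B) := by
  simp only [← cramer_apply, cramer_eq_adjugate_mulVec]
  rfl

theorem trace_adjugate_mul_mul_self (A M : Matrix ι ι K) :
    trace (adjugate A * (M * A)) = trace M * det A := by
  rw [trace_mul_cycle', ← Matrix.mul_assoc, mul_adjugate, smul_mul, Matrix.one_mul, trace_smul,
    smul_eq_mul, mul_comm]

theorem trace_adjugate_mul_updateCol_zero (A : Matrix ι ι K) (l : ι) (v : ι → K) :
    trace (adjugate A * updateCol 0 l v) = (A.updateCol l v).det := by
  rw [← cramer_apply, cramer_eq_adjugate_mulVec]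
  simp [trace, mul_apply, updateCol_apply, mulVec, dotProduct]

theorem dotProduct_mul_det_updateCol [IsDomain K] {A : Matrix ι ι K} {l : ι}
    {w : ι → K} (hw : w ≠ 0) (horth : ∀ j ≠ l, w ⬝ᵥ (fun i => A i j) = 0) (v : ι → K) :
    (w ⬝ᵥ fun i => A i l) * (A.updateCol l v).det = (w ⬝ᵥ v) * A.det := by
  -- the replaced column below is orthogonal to `w` as well, so `w` lies in the left kernel
  have hy : (A.updateCol l ((w ⬝ᵥ fun i => A i l) • v + (-(w ⬝ᵥ v)) • fun i => A i l)).det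
      = 0 := by
    by_contra h
    refine hw (eq_zero_of_vecMul_eq_zero h (funext fun j => ?_))
    by_cases hj : j = l
    · subst hj
      simp only [vecMul, updateCol_self, dotProduct_add, dotProduct_smul, smul_eq_mul,
        Pi.zero_apply]
      ring
    · simpa [vecMul, updateCol_ne hj] using horth j hj
  rw [det_updateCol_add, det_updateCol_smul, det_updateCol_smul, updateCol_eq_self] at hy
  linear_combination hy

end CommRing

theorem hasDerivAt_det {𝕜 R : Type*} [NontriviallyNormedField 𝕜] [NormedCommRing R]
    [NormedAlgebra 𝕜 R] {A : 𝕜 → Matrix ι ι R} {A' : Matrix ι ι R} {t : 𝕜}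
    (hA : ∀ i j, HasDerivAt (fun s => A s i j) (A' i j) t) :
    HasDerivAt (fun s => (A s).det) (trace (adjugate (A t) * A')) t := by
  have hexp : HasDerivAt (fun s => ∑ σ : Equiv.Perm ι, (σ.sign : R) * ∏ i, A s (σ i) i)
      (∑ σ : Equiv.Perm ι, (σ.sign : R) *
        ∑ k, (∏ i ∈ univ.erase k, A t (σ i) i) • A' (σ k) k) t :=
    HasDerivAt.fun_sum fun σ _ => (HasDerivAt.fun_finsetProd fun i _ => hA (σ i) i).const_mul _
  simp only [← sum_det_updateCol_eq_trace_adjugate_mul, det_apply']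
  convert hexp using 1
  rw [sum_comm]
  refine sum_congr rfl fun σ _ => ?_
  rw [mul_sum]
  refine sum_congr rfl fun k _ => ?_
  rw [← mul_prod_erase univ _ (mem_univ k), smul_eq_mul, mul_comm (∏ i ∈ _, _)]
  congr 2
  · simp
  · exact prod_congr rfl fun i hi => by simp [ne_of_mem_erase hi]

theorem norm_det_le_factorial_mul_prod {R : Type*} [NormedCommRing R] [NormOneClass R]
    (A : Matrix ι ι R) {c : ι → ℝ} (h : ∀ i j, ‖A i j‖ ≤ c j) :
    ‖A.det‖ ≤ (Fintype.card ι).factorial * ∏ j, c j := by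
  rw [det_apply]
  calc ‖∑ σ : Equiv.Perm ι, σ.sign • ∏ i, A (σ i) i‖
      ≤ ∑ σ : Equiv.Perm ι, ‖σ.sign • ∏ i, A (σ i) i‖ := norm_sum_le _ _
    _ = ∑ σ : Equiv.Perm ι, ‖∏ i, A (σ i) i‖ := sum_congr rfl fun σ _ => by
        rcases Int.units_eq_one_or σ.sign with h | h <;> simp [h]
    _ ≤ ∑ _σ : Equiv.Perm ι, ∏ j, c j := sum_le_sum fun σ _ =>
        (Finset.norm_prod_le _ _).trans <|
          prod_le_prod (fun _ _ => norm_nonneg _) fun i _ => h (σ i) i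
    _ = (Fintype.card ι).factorial * ∏ j, c j := by
        rw [sum_const, card_univ, Fintype.card_perm, nsmul_eq_mul]

end Matrix

section EulerSymbol

variable {ι K : Type*} [Fintype ι] [DecidableEq ι] [Field K]

/-- The principal symbol `a₀(x, ξ) = (2ξξᵀ/‖ξ‖² - I) Du(x)` with `J = Du(x)`, over any field,
with the bilinear `ξ ⬝ᵥ ξ` in place of `‖ξ‖²`. -/
def eulerSymbol (ξ : ι → K) (J : Matrix ι ι K) : Matrix ι ι K :=
  ((2 / (ξ ⬝ᵥ ξ)) • vecMulVec ξ ξ - 1) * J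

theorem eulerSymbol_transpose_mulVec_self {ξ : ι → K} (hξ : ξ ⬝ᵥ ξ ≠ 0) (J : Matrix ι ι K) :
    (eulerSymbol ξ J)ᵀ *ᵥ ξ = Jᵀ *ᵥ ξ := by
  have hfix : ((2 / (ξ ⬝ᵥ ξ)) • vecMulVec ξ ξ - 1) *ᵥ ξ = ξ := by
    rw [sub_mulVec, smul_mulVec, vecMulVec_mulVec, one_mulVec, op_smul_eq_smul, smul_smul,
      div_mul_cancel₀ _ hξ, two_smul, add_sub_cancel_right]
  rw [eulerSymbol, transpose_mul, ← mulVec_mulVec, transpose_sub, transpose_smul,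
    transpose_vecMulVec, transpose_one, hfix]

theorem dotProduct_eulerSymbol_mulVec_self {ξ : ι → K} (hξ : ξ ⬝ᵥ ξ ≠ 0) (J : Matrix ι ι K) :
    ξ ⬝ᵥ eulerSymbol ξ J *ᵥ ξ = ξ ⬝ᵥ J *ᵥ ξ := by
  rw [dotProduct_mulVec, ← mulVec_transpose, eulerSymbol_transpose_mulVec_self hξ,
    mulVec_transpose, ← dotProduct_mulVec]

theorem trace_eulerSymbol (ξ : ι → K) (J : Matrix ι ι K) :
    trace (eulerSymbol ξ J) = 2 / (ξ ⬝ᵥ ξ) * (ξ ⬝ᵥ J *ᵥ ξ) - trace J := by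
  rw [eulerSymbol, sub_mul, trace_sub, smul_mul, trace_smul, vecMulVec_mul, trace_vecMulVec,
    Matrix.one_mul, smul_eq_mul, dotProduct_mulVec, dotProduct_comm ξ (ξ ᵥ* J)]

theorem map_eulerSymbol {L : Type*} [Field L] (f : K →+* L) (ξ : ι → K) (J : Matrix ι ι K) :
    (eulerSymbol ξ J).map f = eulerSymbol (f ∘ ξ) (J.map f) := by
  ext i j
  simp [eulerSymbol, mul_apply, vecMulVec_apply, map_sum, one_apply, ← RingHom.map_dotProduct,
    map_ofNat]

end EulerSymbol

theorem HasDerivAt.dotProduct {ι 𝕜 R : Type*} [Fintype ι] [NontriviallyNormedField 𝕜]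
    [NormedCommRing R] [NormedAlgebra 𝕜 R] {f g : 𝕜 → ι → R} {f' g' : ι → R} {t : 𝕜}
    (hf : HasDerivAt f f' t) (hg : HasDerivAt g g' t) :
    HasDerivAt (fun s => f s ⬝ᵥ g s) (f' ⬝ᵥ g t + f t ⬝ᵥ g') t := by
  simp only [_root_.dotProduct, ← sum_add_distrib]
  exact HasDerivAt.fun_sum fun i _ => (hasDerivAt_pi.1 hf i).mul (hasDerivAt_pi.1 hg i)

section Amplitude

variable {ι : Type*} [Fintype ι] [DecidableEq ι] {J : ℝ → Matrix ι ι ℂ} {ξ : ℝ → ι → ℂ}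

theorem dotProduct_eq_of_hasDerivAt_amplitude (hξ : ∀ t, HasDerivAt ξ (-((J t)ᵀ *ᵥ ξ t)) t)
    (hS : ∀ t, ξ t ⬝ᵥ ξ t ≠ 0) {c : ℝ → ι → ℂ}
    (hc : ∀ t, HasDerivAt c (eulerSymbol (ξ t) (J t) *ᵥ c t) t) (t : ℝ) :
    ξ t ⬝ᵥ c t = ξ 0 ⬝ᵥ c 0 := by
  have hderiv : ∀ s, HasDerivAt (fun s => ξ s ⬝ᵥ c s) 0 s := fun s =>
    ((hξ s).dotProduct (hc s)).congr_deriv <| by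
      rw [dotProduct_mulVec, ← mulVec_transpose, eulerSymbol_transpose_mulVec_self (hS s),
        neg_dotProduct, neg_add_cancel]
  exact is_const_of_deriv_eq_zero (fun s => (hderiv s).differentiableAt)
    (fun s => (hderiv s).deriv) t 0

theorem det_eq_det_zero_of_hasDerivAt_frame (htr : ∀ t, trace (J t) = 0)
    (hξ : ∀ t, HasDerivAt ξ (-((J t)ᵀ *ᵥ ξ t)) t) (hS : ∀ t, ξ t ⬝ᵥ ξ t ≠ 0)
    {A : ℝ → Matrix ι ι ℂ} {l : ι} (hAl : ∀ t i, A t i l = ξ t i)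
    (hA : ∀ j ≠ l, ∀ t, HasDerivAt (fun s i => A s i j)
      (eulerSymbol (ξ t) (J t) *ᵥ fun i => A t i j) t)
    (horth : ∀ j ≠ l, ξ 0 ⬝ᵥ (fun i => A 0 i j) = 0) (t : ℝ) :
    (A t).det = (A 0).det := by
  have hderiv : ∀ t, HasDerivAt (fun s => (A s).det) 0 t := fun t => by
    set P := eulerSymbol (ξ t) (J t)
    set D := -((J t)ᵀ *ᵥ ξ t) - P *ᵥ ξ t
    have hentry : ∀ i j, HasDerivAt (fun s => A s i j) ((P * A t + updateCol 0 l D) i j) t := by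
      intro i j
      by_cases hj : j = l
      · subst hj
        rw [show (fun s => A s i j) = fun s => ξ s i from funext fun s => hAl s i]
        refine (hasDerivAt_pi.1 (hξ t) i).congr_deriv ?_
        simp [D, mul_apply, mulVec, dotProduct, hAl]
      · refine (hasDerivAt_pi.1 (hA j hj t) i).congr_deriv ?_
        rw [Matrix.add_apply, updateCol_ne hj, Matrix.zero_apply, add_zero]
        rfl
    have horth_t : ∀ j ≠ l, ξ t ⬝ᵥ (fun i => A t i j) = 0 := fun j hj => by
      rw [dotProduct_eq_of_hasDerivAt_amplitude hξ hS (hA j hj) t, horth j hj]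
    have hξD : ξ t ⬝ᵥ D = -2 * (ξ t ⬝ᵥ J t *ᵥ ξ t) := by
      rw [dotProduct_sub, dotProduct_neg, dotProduct_eulerSymbol_mulVec_self (hS t),
        dotProduct_mulVec, vecMul_transpose, dotProduct_comm]
      ring
    have hcorr := dotProduct_mul_det_updateCol (A := A t) (w := ξ t)
      (fun h => hS t (by simp [h])) horth_t D
    rw [show (fun i => A t i l) = ξ t from funext (hAl t), hξD] at hcorr
    refine (hasDerivAt_det hentry).congr_deriv ?_
    rw [mul_add, trace_add, trace_adjugate_mul_mul_self, trace_adjugate_mul_updateCol_zero]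
    refine mul_left_cancel₀ (hS t) ?_
    rw [trace_eulerSymbol, htr, sub_zero, mul_zero, mul_add, hcorr, ← mul_assoc, ← mul_assoc,
      mul_div_cancel₀ _ (hS t)]
    ring
  exact is_const_of_deriv_eq_zero (fun s => (hderiv s).differentiableAt)
    (fun s => (hderiv s).deriv) t 0

end Amplitude

def snocCols {n : ℕ} {K : Type*} (b : Fin (n - 1) → Fin n → K) (v : Fin n → K) :
    Matrix (Fin n) (Fin n) K :=
  Matrix.of fun i j => if h : (j : ℕ) < n - 1 then b ⟨j, h⟩ i else v i

theorem det_snocCols_eq_of_bicharacteristic {n : ℕ} (hn : 1 ≤ n)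
    {J : ℝ → Matrix (Fin n) (Fin n) ℝ} (htr : ∀ t, trace (J t) = 0) {ξ : ℝ → Fin n → ℝ}
    (hξne : ∀ t, ξ t ≠ 0) (hξ : ∀ t, HasDerivAt ξ (-((J t)ᵀ *ᵥ ξ t)) t)
    {b : Fin (n - 1) → ℝ → Fin n → ℂ}
    (hb : ∀ k t, HasDerivAt (b k) ((eulerSymbol (ξ t) (J t)).map Complex.ofReal *ᵥ b k t) t)
    (hb0 : ∀ k, b k 0 ⬝ᵥ (fun i => (ξ 0 i : ℂ)) = 0) (t : ℝ) :
    (snocCols (fun k => b k t) fun i => (ξ t i : ℂ)).det =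
      (snocCols (fun k => b k 0) fun i => (ξ 0 i : ℂ)).det := by
  set ξc : ℝ → Fin n → ℂ := fun t => Complex.ofRealHom ∘ ξ t
  set Jc : ℝ → Matrix (Fin n) (Fin n) ℂ := fun t => (J t).map Complex.ofRealHom
  set l : Fin n := ⟨n - 1, by omega⟩
  have hlt : ∀ j ≠ l, (j : ℕ) < n - 1 := fun j hj =>
    lt_of_le_of_ne (Nat.le_sub_one_of_lt j.2) fun h => hj (Fin.ext h)
  refine det_eq_det_zero_of_hasDerivAt_frame (J := Jc) (ξ := ξc) (l := l)
    (A := fun t => snocCols (fun k => b k t) fun i => (ξ t i : ℂ)) ?_ ?_ ?_ ?_ ?_ ?_ t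
  · intro t
    rw [← AddMonoidHom.map_trace, htr, map_zero]
  · exact fun t => hasDerivAt_pi.2 fun i => (hasDerivAt_pi.1 (hξ t) i).ofReal_comp.congr_deriv <| by
      rw [Pi.neg_apply, Pi.neg_apply, Complex.ofReal_neg, ← Complex.ofRealHom_eq_coe,
        RingHom.map_mulVec, transpose_map]
  · exact fun t => by simpa [ξc, ← RingHom.map_dotProduct] using hξne t
  · intro t i
    simp [snocCols, l, ξc]
  · intro j hj t
    simp only [snocCols, of_apply, dif_pos (hlt j hj)]
    rw [← map_eulerSymbol]
    exact hb _ t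
  · intro j hj
    simp only [snocCols, of_apply, dif_pos (hlt j hj), dotProduct_comm]
    exact hb0 _

theorem norm_le_sqrt_sum_sq {ι E : Type*} [Fintype ι] [SeminormedAddGroup E] (v : ι → E)
    (i : ι) : ‖v i‖ ≤ √(∑ j, ‖v j‖ ^ 2) :=
  Real.le_sqrt_of_sq_le (single_le_sum (f := fun j => ‖v j‖ ^ 2) (fun _ _ => sq_nonneg _)
    (mem_univ i))

theorem norm_det_snocCols_le {n : ℕ} (hn : 1 ≤ n) {R : Type*} [NormedCommRing R]
    [NormOneClass R] (b : Fin (n - 1) → Fin n → R) (v : Fin n → R) :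
    ‖(snocCols b v).det‖ ≤
      n.factorial * ((⨆ k, √(∑ j, ‖b k j‖ ^ 2)) ^ (n - 1) * √(∑ j, ‖v j‖ ^ 2)) := by
  set l : Fin n := ⟨n - 1, by omega⟩
  have hcol : ∀ i j, ‖snocCols b v i j‖ ≤
      if j = l then √(∑ j, ‖v j‖ ^ 2) else ⨆ k, √(∑ j, ‖b k j‖ ^ 2) := by
    intro i j
    by_cases h : (j : ℕ) < n - 1
    · have hjl : j ≠ l := fun hj => h.ne (congrArg Fin.val hj)
      simp only [snocCols, of_apply, dif_pos h, if_neg hjl]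
      exact (norm_le_sqrt_sum_sq _ i).trans
        (le_ciSup (f := fun k => √(∑ j, ‖b k j‖ ^ 2)) (Finite.bddAbove_range _) _)
    · have hjl : j = l := Fin.ext (by simp only [l]; omega)
      simpa only [snocCols, of_apply, dif_neg h, if_pos hjl] using norm_le_sqrt_sum_sq v i
  refine (norm_det_le_factorial_mul_prod _ hcol).trans_eq ?_
  rw [Fintype.prod_eq_mul_prod_compl l, if_pos rfl,
    prod_congr rfl fun j hj => if_neg (by simpa using hj), prod_const, card_compl,
    card_singleton, Fintype.card_fin, mul_comm (√_)]

theorem eventually_le_log_div_of_le_mul_pow_mul {R s : ℝ → ℝ} {K C lam : ℝ} {m : ℕ}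
    (hm : 0 < m) (hK : 0 < K) (hbound : ∀ t, K ≤ C * (R t ^ m * s t))
    (hdecay : ∀ ε > 0, ∀ᶠ t in atTop, Real.log (s t) / t ≤ -lam + ε) :
    ∀ ε > 0, ∀ᶠ t in atTop, lam / m - ε ≤ Real.log (R t) / t := by
  intro ε hε
  have hm' : (0 : ℝ) < m := Nat.cast_pos.2 hm
  have hε' : 0 < ε * m / 2 := by positivity
  filter_upwards [hdecay _ hε', eventually_gt_atTop 0,
    eventually_ge_atTop ((Real.log C - Real.log K) / (ε * m / 2))] with t hs ht hT
  have hpos : 0 < C * (R t ^ m * s t) := hK.trans_le (hbound t)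
  obtain ⟨hC, hRs⟩ := mul_ne_zero_iff.1 hpos.ne'
  obtain ⟨hR, hs0⟩ := mul_ne_zero_iff.1 hRs
  have hlog : Real.log K ≤ Real.log C + (m * Real.log (R t) + Real.log (s t)) := by
    rw [← Real.log_pow, ← Real.log_mul hR hs0, ← Real.log_mul hC hRs]
    exact Real.log_le_log hK (hbound t)
  rw [div_le_iff₀ ht] at hs
  rw [div_le_iff₀ hε'] at hT
  have key : (lam - ε * m) * t ≤ m * Real.log (R t) := by linarith
  rw [le_div_iff₀ ht, sub_mul, div_mul_eq_mul_div, sub_le_iff_le_add, div_le_iff₀ hm']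
  linarith

theorem stmt_6_general {n : ℕ} (hn : 2 ≤ n)
    (u : (Fin n → ℝ) → (Fin n → ℝ))
    (hdiv : ∀ y, Matrix.trace (jacobian u y) = 0)
    (x : ℝ → Fin n → ℝ) (ξ : ℝ → Fin n → ℝ)
    (hξne : ∀ t, ξ t ≠ 0)
    (hξ : ∀ t, HasDerivAt ξ (-((jacobian u (x t)).transpose.mulVec (ξ t))) t)
    (lam : ℝ) (hlam : 0 < lam)
    (hdecay : ∀ ε > (0:ℝ), ∀ᶠ t in Filter.atTop,
      Real.log (Real.sqrt (∑ i, ξ t i ^ 2)) / t ≤ -lam + ε)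
    (b : Fin (n - 1) → ℝ → Fin n → ℂ)
    (hb : ∀ i t, HasDerivAt (b i)
      (((((2 / (∑ j, ξ t j ^ 2)) • Matrix.vecMulVec (ξ t) (ξ t) - 1)
          * jacobian u (x t)).map Complex.ofReal).mulVec (b i t)) t)
    (hb0 : ∀ i, (∑ j, b i 0 j * (ξ 0 j : ℂ)) = 0)
    (hdet0 : Matrix.det (Matrix.of fun i (j : Fin n) =>
        if h : (j : ℕ) < n - 1 then b ⟨j, h⟩ 0 i else (ξ 0 i : ℂ)) ≠ 0) :
    0 < lam / ((n : ℝ) - 1) ∧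
    ∀ ε > (0:ℝ), ∃ᶠ t in Filter.atTop,
      lam / ((n : ℝ) - 1) - ε ≤
        Real.log (⨆ i : Fin (n - 1),
          Real.sqrt (∑ j, ‖b i t j‖ ^ 2)) / t := by
  have hsq : ∀ v : Fin n → ℝ, ∑ j, v j ^ 2 = v ⬝ᵥ v := fun v => by simp [dotProduct, sq]
  simp only [hsq] at hb
  have hconst := det_snocCols_eq_of_bicharacteristic (by omega) (fun t => hdiv (x t)) hξne hξ
    hb hb0
  have hbound : ∀ t, ‖(snocCols (fun k => b k 0) fun i => (ξ 0 i : ℂ)).det‖ ≤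
      n.factorial * ((⨆ k, √(∑ j, ‖b k t j‖ ^ 2)) ^ (n - 1) * √(∑ j, ξ t j ^ 2)) := fun t => by
    simpa [hconst t] using norm_det_snocCols_le (by omega) (fun k => b k t) fun i => (ξ t i : ℂ)
  have hn' : (2 : ℝ) ≤ n := by exact_mod_cast hn
  refine ⟨div_pos hlam (by linarith), fun ε hε => ?_⟩
  have hgrowth := eventually_le_log_div_of_le_mul_pow_mul (by omega) (norm_pos_iff.2 hdet0)
    hbound hdecay ε hε
  rw [Nat.cast_sub (by omega), Nat.cast_one] at hgrowth
  exact hgrowth.frequently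

/-- If the frequency `ξ(t)` decays exponentially
(`limsup (1/t) log ‖ξ(t)‖ ≤ -λ`, `λ > 0`) along a bicharacteristic of a divergence-free
field `u`, and `b₁,…,b_{n−1}` solve the Euler amplitude equation with initial data
orthogonal to `ξ(0)` and with `det[b₁(0),…,b_{n−1}(0),ξ(0)] ≠ 0`, then
`limsup (1/t) log max_i ‖bᵢ(t)‖ ≥ λ/(n−1) > 0`: some amplitude grows exponentially. -/
theorem stmt_6 {n : ℕ} (hn : 2 ≤ n)
    (u : (Fin n → ℝ) → (Fin n → ℝ)) (hu : ContDiff ℝ 1 u)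
    (hdiv : ∀ y, Matrix.trace (jacobian u y) = 0)
    (x : ℝ → Fin n → ℝ) (ξ : ℝ → Fin n → ℝ)
    (hξne : ∀ t, ξ t ≠ 0)
    (hx : ∀ t, HasDerivAt x (u (x t)) t)
    (hξ : ∀ t, HasDerivAt ξ (-((jacobian u (x t)).transpose.mulVec (ξ t))) t)
    (lam : ℝ) (hlam : 0 < lam)
    (hdecay : ∀ ε > (0:ℝ), ∀ᶠ t in Filter.atTop,
      Real.log (Real.sqrt (∑ i, ξ t i ^ 2)) / t ≤ -lam + ε)
    (b : Fin (n - 1) → ℝ → Fin n → ℂ)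
    (hb : ∀ i t, HasDerivAt (b i)
      (((((2 / (∑ j, ξ t j ^ 2)) • Matrix.vecMulVec (ξ t) (ξ t) - 1)
          * jacobian u (x t)).map Complex.ofReal).mulVec (b i t)) t)
    (hb0 : ∀ i, (∑ j, b i 0 j * (ξ 0 j : ℂ)) = 0)
    (hdet0 : Matrix.det (Matrix.of fun i (j : Fin n) =>
        if h : (j : ℕ) < n - 1 then b ⟨j, h⟩ 0 i else (ξ 0 i : ℂ)) ≠ 0) :
    0 < lam / ((n : ℝ) - 1) ∧
    ∀ ε > (0:ℝ), ∃ᶠ t in Filter.atTop,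
      lam / ((n : ℝ) - 1) - ε ≤
        Real.log (⨆ i : Fin (n - 1),
          Real.sqrt (∑ j, ‖b i t j‖ ^ 2)) / t :=
  stmt_6_general hn u hdiv x ξ hξne hξ lam hlam hdecay b hb hb0 hdet0
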